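/- Discrete charge conservation Casimir: consider the discrete dynamics Ė_z = −(ω_p/ω_c) M₀⁻¹ ṽ_z and ṅ = −d₀ M₀⁻¹ ṽ_z (where d₀ is the discrete derivative matrix, M₀ the invertible mass matrix, and ṽ_z : ℝ → ℝᴺ an arbitrary continuous function of time). Then the quantity d₀ E_z(t) − (ω_p/ω_c) n(t) is constant in time; in particular, if d₀ E_z(0) = (ω_p/ω_c) n(0) (discrete Gauss law), then d₀ E_z(t) = (ω_p/ω_c) n(t) for all t. -/

import Mathlib

/-!
Applying `d₀` to the equation for `E_z` gives `d/dt (d₀ E_z) = -(ω_p/ω_c) d₀ M₀⁻¹ ṽ_z`, which is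
exactly `(ω_p/ω_c) ṅ`; so `d₀ E_z − (ω_p/ω_c) n` has zero derivative and is constant in time.
-/

theorem ContinuousLinearMap.apply_sub_smul_eq_of_hasDerivAt
    {E F : Type*} [NormedAddCommGroup E] [NormedSpace ℝ E]
    [NormedAddCommGroup F] [NormedSpace ℝ F]
    (L : E →L[ℝ] F) (c : ℝ) {f f' : ℝ → E} {g g' : ℝ → F}
    (hf : ∀ t, HasDerivAt f (f' t) t) (hg : ∀ t, HasDerivAt g (g' t) t)
    (hfg : ∀ t, L (f' t) = c • g' t) (s t : ℝ) :
    L (f s) - c • g s = L (f t) - c • g t := by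
  have hzero : ∀ t, HasDerivAt (L ∘ f - c • g) 0 t := fun t => by
    simpa [hfg t] using (L.hasFDerivAt.comp_hasDerivAt t (hf t)).sub ((hg t).const_smul c)
  exact is_const_of_deriv_eq_zero (fun t => (hzero t).differentiableAt)
    (fun t => (hzero t).deriv) s t

theorem stmt_19_general (N₀ N₁ : ℕ)
    (d₀ : Matrix (Fin N₁) (Fin N₀) ℝ)
    (M₀ : Matrix (Fin N₀) (Fin N₀) ℝ)
    (ωp ωc : ℝ)
    (vz : ℝ → (Fin N₀ → ℝ))
    (Ez : ℝ → (Fin N₀ → ℝ)) (n : ℝ → (Fin N₁ → ℝ))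
    (hEz : ∀ t : ℝ, HasDerivAt Ez (-((ωp / ωc) • (M₀⁻¹.mulVec (vz t)))) t)
    (hn : ∀ t : ℝ, HasDerivAt n (-(d₀.mulVec (M₀⁻¹.mulVec (vz t)))) t) :
    (∀ s t : ℝ,
      d₀.mulVec (Ez s) - (ωp / ωc) • n s = d₀.mulVec (Ez t) - (ωp / ωc) • n t) ∧
    (d₀.mulVec (Ez 0) = (ωp / ωc) • n 0 →
      ∀ t : ℝ, d₀.mulVec (Ez t) = (ωp / ωc) • n t) := by
  have hconst : ∀ s t : ℝ,
      d₀.mulVec (Ez s) - (ωp / ωc) • n s = d₀.mulVec (Ez t) - (ωp / ωc) • n t :=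
    (Matrix.mulVecLin d₀).toContinuousLinearMap.apply_sub_smul_eq_of_hasDerivAt
      (ωp / ωc) hEz hn fun t => by
        simp [Matrix.mulVec_neg, Matrix.mulVec_smul]
  refine ⟨hconst, fun hgauss t => ?_⟩
  simpa [hgauss, sub_eq_zero] using hconst t 0

/-- Discrete charge conservation Casimir: `d₀ E_z − (ω_p/ω_c) n` is constant
along the discrete dynamics, so the discrete Gauss law is preserved. -/
theorem stmt_19 (N₀ N₁ : ℕ)
    (d₀ : Matrix (Fin N₁) (Fin N₀) ℝ)
    (M₀ : Matrix (Fin N₀) (Fin N₀) ℝ) (hM₀ : IsUnit M₀)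
    (ωp ωc : ℝ) (hωp : ωp ≠ 0) (hωc : ωc ≠ 0)
    (vz : ℝ → (Fin N₀ → ℝ)) (hvz : Continuous vz)
    (Ez : ℝ → (Fin N₀ → ℝ)) (n : ℝ → (Fin N₁ → ℝ))
    (hEz : ∀ t : ℝ, HasDerivAt Ez (-((ωp / ωc) • (M₀⁻¹.mulVec (vz t)))) t)
    (hn : ∀ t : ℝ, HasDerivAt n (-(d₀.mulVec (M₀⁻¹.mulVec (vz t)))) t) :
    (∀ s t : ℝ,
      d₀.mulVec (Ez s) - (ωp / ωc) • n s = d₀.mulVec (Ez t) - (ωp / ωc) • n t) ∧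
    (d₀.mulVec (Ez 0) = (ωp / ωc) • n 0 →
      ∀ t : ℝ, d₀.mulVec (Ez t) = (ωp / ωc) • n t) :=
  stmt_19_general N₀ N₁ d₀ M₀ ωp ωc vz Ez n hEz hn
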